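/- arXiv:cs/0001026 — 2 statements merged into one kernel-verified Lean document; each statement's English description precedes it below -/
import Mathlib

section
/- Theorem 3.1: Given a world w, there exists a unique local name assignment l_w that is minimal (with respect to the pointwise order) in the set of all local name assignments consistent with w. Moreover, for every principal expression p and all keys k₁, k₂: w,l_w,k₁ ⊨ p ▷ k₂ if and only if w,l,k₁ ⊨ p ▷ k₂ holds for all local name assignments l consistent with w. -/
/-! Interpretation is monotone in the local name assignment, so each certificate `n ▷ p`
issued by `k` is a constraint `⟦p⟧ ⊆ l(k, n)` whose left side only grows with `l`. Hence the
consistent assignments are closed under arbitrary pointwise intersections, and the intersection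
of all of them is the least one. A statement `p ▷ k₂` says `k₂ ∈ ⟦p⟧`, which is upward closed in
`l`, so it holds at the least consistent assignment iff it holds at every consistent one. -/

/-- Principal expressions over keys `K`, global names `G`, local names `N`. -/
inductive PExp (K G N : Type*) where
  | key : K → PExp K G N
  | glob : G → PExp K G N
  | loc : N → PExp K G N
  | s : PExp K G N → PExp K G N → PExp K G N

/-- Formulas of LLNC. -/
inductive Fml (K G N : Type*) where
  | bdto : PExp K G N → PExp K G N → Fml K G N
  | cert : K → Fml K G N → Fml K G N
  | not : Fml K G N → Fml K G N
  | and : Fml K G N → Fml K G N → Fml K G N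

/-- A world: an interpretation of global names and an assignment of
certificates to keys, with only finitely many certificates issued. -/
structure World (K G N : Type*) where
  beta : G → Set K
  certs : K → Set (Fml K G N)
  finite_certs : (⋃ k, certs k).Finite

variable {K G N : Type*}

/-- The interpretation of a principal expression relative to a world, a
local name assignment, and a key. -/
def interp (w : World K G N) (l : K → N → Set K) : PExp K G N → K → Set K
  | .key k', _ => {k'}
  | .glob g, _ => w.beta g
  | .loc n, k => l k n
  | .s p q, k => ⋃ k' ∈ interp w l p k, interp w l q k'

/-- Satisfaction of a formula at a world, local name assignment, and key. -/
def Sat (w : World K G N) (l : K → N → Set K) (k : K) : Fml K G N → Prop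
  | .bdto p q => interp w l q k ⊆ interp w l p k
  | .cert k' φ => φ ∈ w.certs k'
  | .not φ => ¬ Sat w l k φ
  | .and φ ψ => Sat w l k φ ∧ Sat w l k ψ

/-- A local name assignment is consistent with a world if every issued
binding certificate holds at the issuer. -/
def Consistent (w : World K G N) (l : K → N → Set K) : Prop :=
  ∀ (k : K) (n : N) (p : PExp K G N),
    Fml.bdto (.loc n) p ∈ w.certs k → Sat w l k (.bdto (.loc n) p)

theorem interp_mono (w : World K G N) (p : PExp K G N) : Monotone fun l => interp w l p := by
  intro l l' hl
  induction p with
  | key => exact le_rfl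
  | glob => exact le_rfl
  | loc n => exact fun k => hl k n
  | s p q ihp ihq => exact fun k => Set.biUnion_mono (ihp k) fun k' _ => ihq k'

theorem Sat.bdto_key_mono (w : World K G N) {l l' : K → N → Set K} (hl : l ≤ l')
    {p : PExp K G N} {k k' : K} (h : Sat w l k (.bdto p (.key k'))) :
    Sat w l' k (.bdto p (.key k')) :=
  h.trans (interp_mono w p hl k)

theorem consistent_sInf (w : World K G N) {S : Set (K → N → Set K)}
    (hS : ∀ l ∈ S, Consistent w l) : Consistent w (sInf S) := by
  intro k n p hp x hx
  have hmem : ∀ l ∈ S, x ∈ l k n :=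
    fun l hl => hS l hl k n p hp (interp_mono w p (sInf_le hl) k hx)
  show x ∈ sInf S k n
  simpa only [sInf_apply, iInf_apply, Set.iInf_eq_iInter, Set.mem_iInter, Subtype.forall]
    using hmem

theorem isLeast_consistent (w : World K G N) :
    IsLeast {l | Consistent w l} (sInf {l | Consistent w l}) :=
  ⟨consistent_sInf w fun _ => id, fun _ => sInf_le⟩

theorem min_consistent_assignment_general (w : World K G N) :
    (∃! lw : K → N → Set K,
        Consistent w lw ∧ ∀ l, Consistent w l → ∀ (k : K) (n : N), lw k n ⊆ l k n) ∧
    (∀ lw : K → N → Set K,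
        (Consistent w lw ∧ ∀ l, Consistent w l → ∀ (k : K) (n : N), lw k n ⊆ l k n) →
        ∀ (p : PExp K G N) (k₁ k₂ : K),
          Sat w lw k₁ (.bdto p (.key k₂)) ↔
            ∀ l, Consistent w l → Sat w l k₁ (.bdto p (.key k₂))) := by
  have hleast := isLeast_consistent w
  refine ⟨⟨_, hleast, fun l hl => IsLeast.unique (s := {l | Consistent w l}) hl hleast⟩, ?_⟩
  rintro lw ⟨hcons, hmin⟩ p k₁ k₂
  exact ⟨fun h l hl => h.bdto_key_mono w (hmin l hl), fun h => h lw hcons⟩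

/-- Theorem 3.1: there is a unique local name assignment minimal
(in the pointwise order) among those consistent with `w`; moreover, it satisfies
`p ▷ k₂` at `k₁` iff every assignment consistent with `w` does. -/
theorem min_consistent_assignment [Nonempty K] (w : World K G N) :
    (∃! lw : K → N → Set K,
        Consistent w lw ∧ ∀ l, Consistent w l → ∀ (k : K) (n : N), lw k n ⊆ l k n) ∧
    (∀ lw : K → N → Set K,
        (Consistent w lw ∧ ∀ l, Consistent w l → ∀ (k : K) (n : N), lw k n ⊆ l k n) →
        ∀ (p : PExp K G N) (k₁ k₂ : K),
          Sat w lw k₁ (.bdto p (.key k₂)) ↔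
            ∀ l, Consistent w l → Sat w l k₁ (.bdto p (.key k₂))) :=
  min_consistent_assignment_general w
end

section
/- Corollary 5.3: For every world w, all x, y ∈ K ∪ G ∪ N, and every principal expression p: the minimal Herbrand model M_w of Σ_w satisfies τ_{x,y}(p) if and only if x, y ∈ K and w,x ⊨_c p ▷ y. -/
variable {K G N : Type*}

/-- The Herbrand domain: the constants `K ∪ G ∪ N`. -/
abbrev Dom (K G N : Type*) := K ⊕ (G ⊕ N)

/-- The constant for a key. -/
def dkey (k : K) : Dom K G N := Sum.inl k

/-- The constant for a global name. -/
def dglob (g : G) : Dom K G N := Sum.inr (Sum.inl g)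

/-- The constant for a local name. -/
def dloc (n : N) : Dom K G N := Sum.inr (Sum.inr n)

/-- A Herbrand structure over the vocabulary `V`, identified with the set of
tuples of the ternary predicate `name` that it satisfies. -/
abbrev Herbrand (K G N : Type*) := Set (Dom K G N × Dom K G N × Dom K G N)

/-- Satisfaction of the translated formula `τ_{x,y}(p)` in a Herbrand
structure `M`. -/
def tauSat (M : Herbrand K G N) : PExp K G N → Dom K G N → Dom K G N → Prop
  | .key k, x, y => (x, dkey k, y) ∈ M
  | .glob g, x, y => (x, dglob g, y) ∈ M
  | .loc n, x, y => (x, dloc n, y) ∈ M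
  | .s q r, x, y => ∃ z : Dom K G N, tauSat M q x z ∧ tauSat M r z y

/-- `M` represents the world `w` and the local name assignment `l`. -/
def Represents (M : Herbrand K G N) (w : World K G N) (l : K → N → Set K) : Prop :=
  ∀ x y z : Dom K G N, (x, y, z) ∈ M ↔
    ((∃ k₁ k₂ : K, x = dkey k₁ ∧ y = dkey k₂ ∧ z = dkey k₂) ∨
     (∃ (k₁ : K) (g : G) (k₂ : K), x = dkey k₁ ∧ y = dglob g ∧ z = dkey k₂ ∧ k₂ ∈ w.beta g) ∨
     (∃ (k₁ : K) (n : N) (k₂ : K), x = dkey k₁ ∧ y = dloc n ∧ z = dkey k₂ ∧ k₂ ∈ l k₁ n))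

/-- `lw` is the (unique) minimal local name assignment consistent with `w`. -/
def IsMinConsistent (w : World K G N) (lw : K → N → Set K) : Prop :=
  Consistent w lw ∧ ∀ l, Consistent w l → ∀ (k : K) (n : N), lw k n ⊆ l k n

/-- `M` is a Herbrand model of the definite Horn theory `Σ_w`. -/
def SigmaModel (w : World K G N) (M : Herbrand K G N) : Prop :=
  (∀ k₁ k₂ : K, (dkey k₁, dkey k₂, dkey k₂) ∈ M) ∧
  (∀ (k₁ k₂ : K) (g : G), k₂ ∈ w.beta g → (dkey k₁, dglob g, dkey k₂) ∈ M) ∧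
  (∀ (k : K) (n : N) (q : PExp K G N), Fml.bdto (.loc n) q ∈ w.certs k →
    ∀ y : Dom K G N, tauSat M q (dkey k) y → (dkey k, dloc n, y) ∈ M)

/-- `M` is the minimal Herbrand model of `Σ_w` (with respect to containment). -/
def IsMinModel (w : World K G N) (M : Herbrand K G N) : Prop :=
  SigmaModel w M ∧ ∀ M' : Herbrand K G N, SigmaModel w M' → M ⊆ M'

/-! `M_w` is squeezed between two structures determined by `l_w`. The Herbrand structure
representing `(w, l_w)` is a model of `Σ_w` because `l_w` is consistent, so it contains `M_w`;
in it `τ_{x,y}(p)` holds exactly when `x, y` are keys with `y ∈ ⟦p⟧_{w,l_w,x}`. Conversely the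
local name assignment read off `M_w` is consistent with `w`, hence contains `l_w`, and `M_w`
realises `τ` for every interpretation it induces. -/

section HerbrandTau

variable {w : World K G N} {l l' : K → N → Set K} {M M' : Herbrand K G N}

theorem tauSat_mono (h : M ⊆ M') {p : PExp K G N} {x y : Dom K G N}
    (hp : tauSat M p x y) : tauSat M' p x y := by
  induction p generalizing x y with
  | key | glob | loc => exact h hp
  | s q r ihq ihr =>
    obtain ⟨z, hq, hr⟩ := hp
    exact ⟨z, ihq hq, ihr hr⟩

theorem interp_mono_s17 (h : ∀ k n, l k n ⊆ l' k n) (p : PExp K G N) (k : K) :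
    interp w l p k ⊆ interp w l' p k := by
  induction p generalizing k with
  | key | glob => exact subset_rfl
  | loc n => exact h k n
  | s q r ihq ihr =>
    simp only [interp]
    exact Set.biUnion_mono (ihq k) fun k' _ => ihr k'

theorem sat_bdto_key_iff {k k' : K} {p : PExp K G N} :
    Sat w l k (.bdto p (.key k')) ↔ k' ∈ interp w l p k := by
  simp [Sat, interp]

theorem dkey_injective : Function.Injective (dkey : K → Dom K G N) :=
  Sum.inl_injective

theorem tauSat_iff_of_represents (hM : Represents M w l) (p : PExp K G N) (x y : Dom K G N) :
    tauSat M p x y ↔ ∃ kx ky : K, x = dkey kx ∧ y = dkey ky ∧ ky ∈ interp w l p kx := by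
  induction p generalizing x y with
  | key | glob | loc =>
    rw [tauSat, hM]
    simp [interp, dkey, dglob, dloc]
  | s q r ihq ihr =>
    simp only [tauSat, ihq, ihr, interp, Set.mem_iUnion]
    constructor
    · rintro ⟨z, ⟨kx, kz, rfl, rfl, hq⟩, ⟨kz', ky, hz, rfl, hr⟩⟩
      obtain rfl := dkey_injective hz
      exact ⟨kx, ky, rfl, rfl, kz, hq, hr⟩
    · rintro ⟨kx, ky, rfl, rfl, kz, hq, hr⟩
      exact ⟨dkey kz, ⟨kx, kz, rfl, rfl, hq⟩, ⟨kz, ky, rfl, rfl, hr⟩⟩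

variable (w l) in
def canonHerbrand : Herbrand K G N :=
  {t | (∃ k₁ k₂ : K, t = (dkey k₁, dkey k₂, dkey k₂)) ∨
       (∃ (k₁ : K) (g : G) (k₂ : K), t = (dkey k₁, dglob g, dkey k₂) ∧ k₂ ∈ w.beta g) ∨
       (∃ (k₁ : K) (n : N) (k₂ : K), t = (dkey k₁, dloc n, dkey k₂) ∧ k₂ ∈ l k₁ n)}

theorem represents_canonHerbrand : Represents (canonHerbrand w l) w l := by
  intro x y z
  simp only [canonHerbrand, Set.mem_ofPred_eq, Prod.mk.injEq]
  grind

theorem sigmaModel_canonHerbrand (hl : Consistent w l) : SigmaModel w (canonHerbrand w l) := by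
  refine ⟨fun k₁ k₂ => Or.inl ⟨k₁, k₂, rfl⟩,
    fun k₁ k₂ g hg => Or.inr (Or.inl ⟨k₁, g, k₂, rfl, hg⟩), ?_⟩
  intro k n q hq y hy
  obtain ⟨kx, ky, hx, rfl, hky⟩ :=
    (tauSat_iff_of_represents represents_canonHerbrand q _ y).1 hy
  obtain rfl := dkey_injective hx
  exact Or.inr (Or.inr ⟨k, n, ky, rfl, hl k n q hq hky⟩)

variable (M) in
def localNames : K → N → Set K :=
  fun k n => {k' | (dkey k, dloc n, dkey k') ∈ M}

theorem SigmaModel.tauSat_of_mem_interp (hM : SigmaModel w M) {p : PExp K G N} {kx ky : K}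
    (h : ky ∈ interp w (localNames M) p kx) : tauSat M p (dkey kx) (dkey ky) := by
  induction p generalizing kx ky with
  | key k =>
    obtain rfl : ky = k := h
    exact hM.1 kx ky
  | glob g => exact hM.2.1 kx ky g h
  | loc n => exact h
  | s q r ihq ihr =>
    simp only [interp, Set.mem_iUnion] at h
    obtain ⟨kz, hq, hr⟩ := h
    exact ⟨dkey kz, ihq hq, ihr hr⟩

theorem SigmaModel.consistent_localNames (hM : SigmaModel w M) :
    Consistent w (localNames M) :=
  fun k n q hq ky hky => hM.2.2 k n q hq (dkey ky) (hM.tauSat_of_mem_interp hky)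

end HerbrandTau

theorem min_herbrand_tau_general (w : World K G N)
    (M : Herbrand K G N) (hM : IsMinModel w M)
    (lw : K → N → Set K) (hlw : IsMinConsistent w lw)
    (x y : Dom K G N) (p : PExp K G N) :
    tauSat M p x y ↔ ∃ kx ky : K, x = dkey kx ∧ y = dkey ky ∧
      Sat w lw kx (.bdto p (.key ky)) := by
  obtain ⟨hSigma, hMmin⟩ := hM
  obtain ⟨hlw_cons, hlw_min⟩ := hlw
  have hM_sub : M ⊆ canonHerbrand w lw := hMmin _ (sigmaModel_canonHerbrand hlw_cons)
  have hlw_sub : ∀ k n, lw k n ⊆ localNames M k n :=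
    hlw_min _ hSigma.consistent_localNames
  simp only [sat_bdto_key_iff]
  constructor
  · intro h
    exact (tauSat_iff_of_represents represents_canonHerbrand p x y).1 (tauSat_mono hM_sub h)
  · rintro ⟨kx, ky, rfl, rfl, hky⟩
    exact hSigma.tauSat_of_mem_interp (interp_mono_s17 hlw_sub p kx hky)

/-- Corollary 5.3: the minimal Herbrand model of `Σ_w` satisfies
`τ_{x,y}(p)` iff `x` and `y` are keys and `w,x ⊨_c p ▷ y`. -/
theorem min_herbrand_tau [Nonempty K] (w : World K G N)
    (M : Herbrand K G N) (hM : IsMinModel w M)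
    (lw : K → N → Set K) (hlw : IsMinConsistent w lw)
    (x y : Dom K G N) (p : PExp K G N) :
    tauSat M p x y ↔ ∃ kx ky : K, x = dkey kx ∧ y = dkey ky ∧
      Sat w lw kx (.bdto p (.key ky)) :=
  min_herbrand_tau_general w M hM lw hlw x y p
end
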